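/- arXiv:2507.06334 — 2 statements merged into one kernel-verified Lean document; each statement's English description precedes it below -/
import Mathlib

section
/- Let G = (V, E) be an undirected graph and G_p = (V, E_p) the random subgraph where each edge is kept independently with probability p ∈ (0, 1). Then with high probability, for every vertex v, core(G_p, v) ≥ (1 − ε)·p·core(G, v) − O(log n / ε). -/
open Finset
open scoped NNRat Classical

/-- Degree of `u` inside `S` in the undirected graph with edge set `F`. -/
def edegIn {n : ℕ} (F : Finset (Sym2 (Fin n))) (S : Finset (Fin n)) (u : Fin n) : ℕ :=
  (S.filter fun w => w ≠ u ∧ s(u, w) ∈ F).card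

/-- Minimum degree of the induced subgraph on `S`. -/
def emindegIn {n : ℕ} (F : Finset (Sym2 (Fin n))) (S : Finset (Fin n)) : ℕ :=
  if h : S.Nonempty then S.inf' h (edegIn F S) else 0

/-- Coreness of `v` in the undirected graph with edge set `F`. -/
def coreE {n : ℕ} (F : Finset (Sym2 (Fin n))) (v : Fin n) : ℕ :=
  ((univ : Finset (Fin n)).powerset.filter fun S => v ∈ S).sup (emindegIn F)

/-- Density of the undirected graph with edge set `F`: the maximum over nonempty
`S` of `|F[S]| / |S|`. -/
def densE {n : ℕ} (F : Finset (Sym2 (Fin n))) : ℚ≥0 :=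
  ((univ : Finset (Fin n)).powerset.filter fun S => S.Nonempty).sup
    fun S => ((F ∩ S.sym2).card : ℚ≥0) / (S.card : ℚ≥0)

/-- Arboricity via Nash-Williams: `max` over `S` with `|S| ≥ 2` of `⌈|F[S]|/(|S|−1)⌉`. -/
def arbE {n : ℕ} (F : Finset (Sym2 (Fin n))) : ℕ :=
  ((univ : Finset (Fin n)).powerset.filter fun S => 2 ≤ S.card).sup
    fun S => ⌈((F ∩ S.sym2).card : ℚ) / ((S.card : ℚ) - 1)⌉₊

/-- The probability, when each edge of `E0` is kept independently with probability `p`,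
that the resulting random edge subset satisfies `A`. -/
noncomputable def probE {n : ℕ} (E0 : Finset (Sym2 (Fin n))) (p : ℝ)
    (A : Finset (Sym2 (Fin n)) → Prop) : ℝ :=
  ∑ F ∈ E0.powerset,
    if A F then p ^ F.card * (1 - p) ^ (E0.card - F.card) else 0

/-!
For each vertex `v` fix a set `S v ∋ v` whose induced minimum degree in `G` is `k = core(G, v)`.
Every `u ∈ S v` has at least `k` neighbours in `S v`, each kept independently with probability
`p`, so by Chernoff's bound (exponential moment at `exp (-ε)`) fewer than
`(1 - ε) p k - D` of them survive with probability at most `exp (-ε D) = n⁻³` when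
`D = 3 log n / ε`. A union bound over the at most `n²` pairs `(v, u)` shows that with probability
at least `1 - 1/n` every `S v` keeps minimum degree `≥ (1 - ε) p k - D` in `G_p`, and this bounds
`core(G_p, v)` from below.
-/

open Real

section Sampling

variable {n : ℕ} (E0 : Finset (Sym2 (Fin n))) (p : ℝ)

def sampleWeight (F : Finset (Sym2 (Fin n))) : ℝ :=
  p ^ #F * (1 - p) ^ (#E0 - #F)

lemma probE_eq_sum_sampleWeight (A : Finset (Sym2 (Fin n)) → Prop) :
    probE E0 p A = ∑ F ∈ E0.powerset, if A F then sampleWeight E0 p F else 0 :=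
  rfl

variable {E0 p}

lemma sampleWeight_nonneg (hp0 : 0 ≤ p) (hp1 : p ≤ 1) (F : Finset (Sym2 (Fin n))) :
    0 ≤ sampleWeight E0 p F :=
  mul_nonneg (pow_nonneg hp0 _) (pow_nonneg (sub_nonneg.mpr hp1) _)

variable (E0 p)

lemma sum_sampleWeight_mul_pow_card_inter (T : Finset (Sym2 (Fin n))) (x : ℝ) :
    ∑ F ∈ E0.powerset, sampleWeight E0 p F * x ^ #(F ∩ T) = (p * x + (1 - p)) ^ #(E0 ∩ T) :=
  calc ∑ F ∈ E0.powerset, sampleWeight E0 p F * x ^ #(F ∩ T)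
      = ∏ e ∈ E0, (p * (if e ∈ T then x else 1) + (1 - p)) := by
        rw [prod_add]
        refine sum_congr rfl fun F hF => ?_
        rw [prod_mul_distrib, prod_const, prod_ite_mem, prod_const, prod_const,
          card_sdiff_of_subset (mem_powerset.mp hF), sampleWeight]
        ring
    _ = ∏ e ∈ E0, (if e ∈ T then p * x + (1 - p) else 1) :=
        prod_congr rfl fun e _ => by split_ifs <;> ring
    _ = (p * x + (1 - p)) ^ #(E0 ∩ T) := by rw [prod_ite_mem, prod_const]

lemma sum_sampleWeight : ∑ F ∈ E0.powerset, sampleWeight E0 p F = 1 := by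
  simpa using sum_sampleWeight_mul_pow_card_inter E0 p ∅ 1

lemma probE_add_probE_not (A : Finset (Sym2 (Fin n)) → Prop) :
    probE E0 p A + probE E0 p (fun F => ¬ A F) = 1 := by
  rw [probE_eq_sum_sampleWeight, probE_eq_sum_sampleWeight, ← sum_add_distrib,
    ← sum_sampleWeight E0 p]
  exact sum_congr rfl fun F _ => by by_cases h : A F <;> simp [h]

variable {E0 p}

lemma probE_le_sum_probE (hp0 : 0 ≤ p) (hp1 : p ≤ 1) {A : Finset (Sym2 (Fin n)) → Prop}
    {ι : Type*} {I : Finset ι} {B : ι → Finset (Sym2 (Fin n)) → Prop}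
    (h : ∀ F ∈ E0.powerset, A F → ∃ i ∈ I, B i F) :
    probE E0 p A ≤ ∑ i ∈ I, probE E0 p (B i) := by
  simp only [probE_eq_sum_sampleWeight]
  rw [sum_comm]
  refine sum_le_sum fun F hF => ?_
  have hw := sampleWeight_nonneg (E0 := E0) hp0 hp1 F
  have hterm : ∀ i ∈ I, 0 ≤ if B i F then sampleWeight E0 p F else 0 :=
    fun i _ => by split_ifs <;> simp [hw]
  split_ifs with hA
  · obtain ⟨i, hi, hB⟩ := h F hF hA
    simpa [hB] using single_le_sum hterm hi
  · exact sum_nonneg hterm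

lemma one_sub_sum_probE_le_probE (hp0 : 0 ≤ p) (hp1 : p ≤ 1) {A : Finset (Sym2 (Fin n)) → Prop}
    {ι : Type*} {I : Finset ι} {B : ι → Finset (Sym2 (Fin n)) → Prop}
    (h : ∀ F ∈ E0.powerset, ¬ A F → ∃ i ∈ I, B i F) :
    1 - ∑ i ∈ I, probE E0 p (B i) ≤ probE E0 p A := by
  linarith [probE_add_probE_not E0 p A, probE_le_sum_probE hp0 hp1 h]

lemma mul_probE_le_sum (hp0 : 0 ≤ p) (hp1 : p ≤ 1) {A : Finset (Sym2 (Fin n)) → Prop}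
    {f : Finset (Sym2 (Fin n)) → ℝ} (hf : ∀ F, 0 ≤ f F) {t : ℝ} (hA : ∀ F, A F → t ≤ f F) :
    t * probE E0 p A ≤ ∑ F ∈ E0.powerset, sampleWeight E0 p F * f F := by
  rw [probE_eq_sum_sampleWeight, mul_sum]
  refine sum_le_sum fun F _ => ?_
  have hw := sampleWeight_nonneg (E0 := E0) hp0 hp1 F
  split_ifs with hAF
  · rw [mul_comm]; exact mul_le_mul_of_nonneg_left (hA F hAF) hw
  · rw [mul_zero]; exact mul_nonneg hw (hf F)

lemma add_mul_exp_neg_le (hp0 : 0 ≤ p) {ε : ℝ} (hε0 : 0 ≤ ε) (hε1 : ε ≤ 1) :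
    p * exp (-ε) + (1 - p) ≤ exp (-(ε * (1 - ε) * p)) := by
  have hexp : exp (-ε) - 1 - -ε ≤ (-ε) ^ 2 :=
    (le_abs_self _).trans (abs_exp_sub_one_sub_id_le (by rwa [abs_neg, abs_of_nonneg hε0]))
  have := add_one_le_exp (-(ε * (1 - ε) * p))
  nlinarith [mul_le_mul_of_nonneg_left hexp hp0]

lemma probE_card_inter_lt_le (hp0 : 0 ≤ p) (hp1 : p ≤ 1) {ε : ℝ} (hε0 : 0 ≤ ε) (hε1 : ε ≤ 1)
    {T : Finset (Sym2 (Fin n))} {m D : ℝ} (hm : m ≤ (1 - ε) * p * #(E0 ∩ T) - D) :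
    probE E0 p (fun F => (#(F ∩ T) : ℝ) < m) ≤ exp (-(ε * D)) := by
  have hmgf : ∑ F ∈ E0.powerset, sampleWeight E0 p F * exp (-ε) ^ #(F ∩ T)
      ≤ exp (-(ε * (1 - ε) * p * #(E0 ∩ T))) := by
    rw [sum_sampleWeight_mul_pow_card_inter]
    calc (p * exp (-ε) + (1 - p)) ^ #(E0 ∩ T)
        ≤ exp (-(ε * (1 - ε) * p)) ^ #(E0 ∩ T) :=
          pow_le_pow_left₀ (by nlinarith [exp_pos (-ε)]) (add_mul_exp_neg_le hp0 hε0 hε1) _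
      _ = exp (-(ε * (1 - ε) * p * #(E0 ∩ T))) := by rw [← exp_nat_mul]; ring_nf
  have hmarkov : exp (-(ε * m)) * probE E0 p (fun F => (#(F ∩ T) : ℝ) < m)
      ≤ ∑ F ∈ E0.powerset, sampleWeight E0 p F * exp (-ε) ^ #(F ∩ T) := by
    refine mul_probE_le_sum hp0 hp1 (fun F => by positivity) fun F hF => ?_
    rw [← exp_nat_mul, exp_le_exp]
    nlinarith
  calc probE E0 p (fun F => (#(F ∩ T) : ℝ) < m)
      = exp (ε * m) * (exp (-(ε * m)) * probE E0 p (fun F => (#(F ∩ T) : ℝ) < m)) := by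
        rw [← mul_assoc, ← exp_add, add_neg_cancel, exp_zero, one_mul]
    _ ≤ exp (ε * m) * exp (-(ε * (1 - ε) * p * #(E0 ∩ T))) :=
        mul_le_mul_of_nonneg_left (hmarkov.trans hmgf) (exp_pos _).le
    _ ≤ exp (-(ε * D)) := by
        rw [← exp_add, exp_le_exp]
        nlinarith [mul_le_mul_of_nonneg_left hm hε0]

end Sampling

section Cores

variable {n : ℕ}

lemma edegIn_eq_card_inter_image (F : Finset (Sym2 (Fin n))) (S : Finset (Fin n)) (u : Fin n) :
    edegIn F S u = #(F ∩ (S.erase u).image fun w => s(u, w)) := by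
  rw [inter_comm, ← filter_mem_eq_inter, filter_image,
    card_image_of_injective _ fun _ _ => Sym2.congr_right.mp, filter_erase, edegIn,
    ← filter_filter, filter_ne', filter_erase]

lemma emindegIn_le_edegIn (F : Finset (Sym2 (Fin n))) {S : Finset (Fin n)} {u : Fin n}
    (hu : u ∈ S) : emindegIn F S ≤ edegIn F S u := by
  rw [emindegIn, dif_pos ⟨u, hu⟩]
  exact inf'_le _ hu

lemma exists_edegIn_eq_emindegIn (F : Finset (Sym2 (Fin n))) {S : Finset (Fin n)}
    (hS : S.Nonempty) : ∃ u ∈ S, edegIn F S u = emindegIn F S := by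
  rw [emindegIn, dif_pos hS]
  obtain ⟨u, hu, h⟩ := exists_mem_eq_inf' hS (edegIn F S)
  exact ⟨u, hu, h.symm⟩

lemma emindegIn_le_coreE (F : Finset (Sym2 (Fin n))) {S : Finset (Fin n)} {v : Fin n}
    (hv : v ∈ S) : emindegIn F S ≤ coreE F v :=
  le_sup (mem_filter.mpr ⟨mem_powerset.mpr (subset_univ S), hv⟩)

lemma exists_emindegIn_eq_coreE (F : Finset (Sym2 (Fin n))) (v : Fin n) :
    ∃ S : Finset (Fin n), v ∈ S ∧ emindegIn F S = coreE F v := by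
  have hne : ((univ : Finset (Fin n)).powerset.filter fun S => v ∈ S).Nonempty :=
    ⟨{v}, mem_filter.mpr ⟨mem_powerset.mpr (subset_univ _), mem_singleton_self v⟩⟩
  obtain ⟨S, hS, h⟩ := exists_mem_eq_sup _ hne (emindegIn F)
  exact ⟨S, (mem_filter.mp hS).2, h.symm⟩

lemma exists_edegIn_lt_of_coreE_lt {F : Finset (Sym2 (Fin n))} {S : Finset (Fin n)} {v : Fin n}
    (hv : v ∈ S) {m : ℝ} (h : (coreE F v : ℝ) < m) : ∃ u ∈ S, (edegIn F S u : ℝ) < m := by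
  obtain ⟨u, hu, hmin⟩ := exists_edegIn_eq_emindegIn F ⟨v, hv⟩
  refine ⟨u, hu, lt_of_le_of_lt ?_ h⟩
  exact_mod_cast hmin ▸ emindegIn_le_coreE F hv

end Cores

lemma probE_edegIn_lt_le {n : ℕ} {E0 : Finset (Sym2 (Fin n))} {p ε : ℝ} (hp0 : 0 ≤ p)
    (hp1 : p ≤ 1) (hε0 : 0 ≤ ε) (hε1 : ε ≤ 1) {S : Finset (Fin n)} {u : Fin n} (hu : u ∈ S)
    (D : ℝ) :
    probE E0 p (fun F => (edegIn F S u : ℝ) < (1 - ε) * p * emindegIn E0 S - D)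
      ≤ exp (-(ε * D)) := by
  simp only [edegIn_eq_card_inter_image]
  refine probE_card_inter_lt_le hp0 hp1 hε0 hε1 ?_
  have hdeg : (emindegIn E0 S : ℝ) ≤ #(E0 ∩ (S.erase u).image fun w => s(u, w)) := by
    rw [← edegIn_eq_card_inter_image]
    exact_mod_cast emindegIn_le_edegIn E0 hu
  have : 0 ≤ (1 - ε) * p := mul_nonneg (sub_nonneg.mpr hε1) hp0
  nlinarith

/-- Also true for `n = 0`, where both sides are `0` (`0 ^ (-1 : ℝ) = 0`). -/
lemma sq_mul_exp_neg_three_mul_log (n : ℕ) :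
    (n : ℝ) ^ 2 * exp (-(3 * log n)) = (n : ℝ) ^ (-1 : ℝ) := by
  rcases n.eq_zero_or_pos with rfl | hn
  · simp
  · have hn' : (0 : ℝ) < n := by exact_mod_cast hn
    rw [show 3 * log n = log ((n : ℝ) ^ 3) by rw [log_pow]; norm_num, exp_neg,
      exp_log (by positivity), rpow_neg_one]
    field_simp

/-- Sampling each edge independently with probability `p`, with high probability every
vertex satisfies `core(G_p, v) ≥ (1 − ε)·p·core(G, v) − O(log n / ε)`. -/
theorem core_sample_lower_whp :
    ∃ C c : ℝ, 0 < C ∧ 0 < c ∧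
      ∀ (n : ℕ) (G : SimpleGraph (Fin n)) [DecidableRel G.Adj] (p ε : ℝ),
        0 < p → p < 1 → 0 < ε → ε < 1 →
        1 - (n : ℝ) ^ (-c) ≤
          probE G.edgeFinset p (fun F => ∀ v : Fin n,
            (1 - ε) * p * (coreE G.edgeFinset v : ℝ) - C * Real.log n / ε
              ≤ (coreE F v : ℝ)) := by
  refine ⟨3, 1, by norm_num, by norm_num, fun n G _ p ε hp0 hp1 hε0 hε1 => ?_⟩
  choose S hvS hS using exists_emindegIn_eq_coreE G.edgeFinset
  set D := 3 * log n / ε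
  let I := (univ : Finset (Fin n × Fin n)).filter fun i => i.2 ∈ S i.1
  let B : Fin n × Fin n → Finset (Sym2 (Fin n)) → Prop := fun i F =>
    (edegIn F (S i.1) i.2 : ℝ) < (1 - ε) * p * coreE G.edgeFinset i.1 - D
  have hbad : ∀ F ∈ G.edgeFinset.powerset, ¬ (∀ v : Fin n,
      (1 - ε) * p * (coreE G.edgeFinset v : ℝ) - D ≤ (coreE F v : ℝ)) → ∃ i ∈ I, B i F := by
    intro F _ hF
    obtain ⟨v, hv⟩ := not_forall.mp hF
    obtain ⟨u, hu, hlt⟩ := exists_edegIn_lt_of_coreE_lt (hvS v) (not_le.mp hv)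
    exact ⟨(v, u), mem_filter.mpr ⟨mem_univ _, hu⟩, hlt⟩
  have hB : ∀ i ∈ I, probE G.edgeFinset p (B i) ≤ exp (-(ε * D)) := fun i hi => by
    have h := probE_edegIn_lt_le (E0 := G.edgeFinset) hp0.le hp1.le hε0.le hε1.le
      (mem_filter.mp hi).2 D
    rw [hS] at h
    exact h
  have hcard : (#I : ℝ) ≤ n ^ 2 := by
    exact_mod_cast (card_filter_le _ _).trans (by simp [sq])
  calc 1 - (n : ℝ) ^ (-1 : ℝ) = 1 - n ^ 2 * exp (-(ε * D)) := by
        rw [mul_div_cancel₀ _ hε0.ne', sq_mul_exp_neg_three_mul_log]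
    _ ≤ 1 - ∑ i ∈ I, probE G.edgeFinset p (B i) := by
        have := sum_le_card_nsmul I _ _ hB
        rw [nsmul_eq_mul] at this
        nlinarith [exp_pos (-(ε * D))]
    _ ≤ _ := one_sub_sum_probE_le_probE hp0.le hp1.le hbad
end

section
/- Expansion bound: let G = (V, E) be a directed graph on n vertices in which every vertex w reachable from a fixed vertex v within d = ⌈4 log n / ε⌉ directed steps satisfies δ⁺(w) > (1 + ε/2)·ρ(G), where ρ(G) is the density of the underlying undirected graph and ε ∈ (0, 0.1). Then defining S_0 = {v} and S_{i+1} = S_i ∪ {u : (w → u) ∈ E, w ∈ S_i}, we have |S_{i+1}| ≥ (1 + ε/2)·|S_i| for all 0 ≤ i < d; consequently no such vertex v exists (as |S_d| > n gives a contradiction). -/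
open Finset
open scoped NNRat

/-- Out-degree of `v` in the directed edge set `E`. -/
def outdeg {V : Type*} [DecidableEq V] (E : Finset (V × V)) (v : V) : ℕ :=
  (E.filter fun e => e.1 = v).card

/-- Density of the underlying undirected graph: the maximum over nonempty `S ⊆ V`
of `|E[S]| / |S|`. -/
def ddensity {V : Type*} [Fintype V] [DecidableEq V] (E : Finset (V × V)) : ℚ≥0 :=
  ((univ : Finset V).powerset.filter fun S => S.Nonempty).sup
    fun S => ((E.filter fun e => e.1 ∈ S ∧ e.2 ∈ S).card : ℚ≥0) / (S.card : ℚ≥0)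

/-- One expansion step: `S ↦ S ∪ {u : (w → u) ∈ E, w ∈ S}`. -/
def expandStep {V : Type*} [DecidableEq V] (E : Finset (V × V)) (A : Finset V) : Finset V :=
  A ∪ (E.filter fun e => e.1 ∈ A).image Prod.snd

/-!
Every vertex of `S_i` (for `i ≤ d`) has out-degree above `c·ρ(G)`, `c = 1 + ε/2`, and all of
its out-edges lie inside `S_{i+1}`. Hence `c·ρ·|S_i| < |E[S_{i+1}]| ≤ ρ·|S_{i+1}|`, so each
step grows the set by a factor `c`. After `d + 1` steps `|S_{d+1}| ≥ c^{d+1} > c^d ≥ n`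
(because `log c ≥ ε/4`), which no subset of `V` can satisfy.
-/

section Graph

variable {V : Type*} [DecidableEq V] (E : Finset (V × V))

lemma sum_outdeg_eq_card_filter_fst_mem (A : Finset V) :
    ∑ w ∈ A, outdeg E w = #(E.filter fun e => e.1 ∈ A) := by
  rw [card_eq_sum_card_fiberwise (f := Prod.fst) (s := E.filter fun e => e.1 ∈ A) (t := A)
    fun e he => (mem_filter.1 he).2]
  refine sum_congr rfl fun w hw => ?_
  rw [outdeg, filter_filter]
  congr 1
  exact filter_congr fun e _ => ⟨fun h => ⟨h ▸ hw, h⟩, And.right⟩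

lemma subset_expandStep (A : Finset V) : A ⊆ expandStep E A :=
  subset_union_left

lemma filter_fst_mem_subset_filter_mem_expandStep (A : Finset V) :
    (E.filter fun e => e.1 ∈ A) ⊆
      E.filter fun e => e.1 ∈ expandStep E A ∧ e.2 ∈ expandStep E A := by
  intro e he
  obtain ⟨heE, heA⟩ := mem_filter.1 he
  exact mem_filter.2 ⟨heE, subset_expandStep E A heA,
    mem_union_right _ (mem_image_of_mem _ he)⟩

lemma card_filter_mem_le_ddensity_mul_card [Fintype V] {S : Finset V} (hS : S.Nonempty) :
    (#(E.filter fun e => e.1 ∈ S ∧ e.2 ∈ S) : ℚ≥0) ≤ ddensity E * #S := by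
  have h := le_sup (f := fun S : Finset V =>
      (#(E.filter fun e => e.1 ∈ S ∧ e.2 ∈ S) : ℚ≥0) / #S)
    (mem_filter.2 ⟨mem_powerset.2 (subset_univ S), hS⟩)
  rwa [div_le_iff₀ (by exact_mod_cast hS.card_pos)] at h

lemma mul_card_lt_card_expandStep [Fintype V] (c : ℝ) {A : Finset V} (hA : A.Nonempty)
    (hout : ∀ w ∈ A, c * (ddensity E : ℝ) < outdeg E w) :
    c * #A < #(expandStep E A) := by
  have hout_sum : #A * (c * ddensity E) < ∑ w ∈ A, (outdeg E w : ℝ) := by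
    simpa [sum_const, nsmul_eq_mul] using sum_lt_sum_of_nonempty hA hout
  have hsum_le : ∑ w ∈ A, (outdeg E w : ℝ) ≤ ddensity E * #(expandStep E A) :=
    calc ∑ w ∈ A, (outdeg E w : ℝ) = #(E.filter fun e => e.1 ∈ A) := by
          exact_mod_cast sum_outdeg_eq_card_filter_fst_mem E A
      _ ≤ #(E.filter fun e => e.1 ∈ expandStep E A ∧ e.2 ∈ expandStep E A) := by
          exact_mod_cast card_le_card (filter_fst_mem_subset_filter_mem_expandStep E A)
      _ ≤ ddensity E * #(expandStep E A) := by
          exact_mod_cast card_filter_mem_le_ddensity_mul_card E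
            (hA.mono (subset_expandStep E A))
  have hρ : 0 < (ddensity E : ℝ) := by
    by_contra! hρ
    have hρ0 : (ddensity E : ℝ) = 0 := le_antisymm hρ (NNRat.cast_nonneg _)
    rw [hρ0] at hout_sum hsum_le
    linarith
  exact lt_of_mul_lt_mul_left (by linarith) hρ.le

end Graph

lemma pow_mul_le_of_forall_mul_le_succ {R : Type*} [CommSemiring R] [PartialOrder R]
    [IsOrderedRing R] {c : R} (hc : 0 ≤ c) {a : ℕ → R} {k : ℕ}
    (h : ∀ i < k, c * a i ≤ a (i + 1)) : c ^ k * a 0 ≤ a k := by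
  induction k with
  | zero => simp
  | succ k ih =>
    calc c ^ (k + 1) * a 0 = c * (c ^ k * a 0) := by ring
      _ ≤ c * a k := mul_le_mul_of_nonneg_left (ih fun i hi => h i (by omega)) hc
      _ ≤ a (k + 1) := h k (by omega)

lemma le_one_add_half_pow_ceil_log_div {x ε : ℝ} (hx : 0 < x) (hε0 : 0 < ε) (hε4 : ε ≤ 4) :
    x ≤ (1 + ε / 2) ^ ⌈4 * Real.log x / ε⌉₊ := by
  set d := ⌈4 * Real.log x / ε⌉₊
  have hlog_c : ε / 4 ≤ Real.log (1 + ε / 2) := by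
    refine le_trans ?_ (Real.le_log_one_add_of_nonneg (by positivity : 0 ≤ ε / 2))
    rw [div_le_div_iff₀ (by norm_num) (by positivity)]
    nlinarith
  have hlog_x : Real.log x ≤ d * (ε / 4) := by
    have := (div_le_iff₀ hε0).1 (Nat.le_ceil (4 * Real.log x / ε))
    linarith
  rw [← Real.log_le_log_iff hx (by positivity), Real.log_pow]
  exact hlog_x.trans (mul_le_mul_of_nonneg_left hlog_c d.cast_nonneg)

/-- Expansion bound: if every vertex reachable from `v` within `d = ⌈4 log n / ε⌉`
directed steps has out-degree exceeding `(1 + ε/2)·ρ(G)`, then each expansion step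
starting from `{v}` grows the set by a factor `(1 + ε/2)`; consequently no such vertex
`v` exists (the hypotheses are contradictory). -/
theorem expansion_bound {V : Type*} [Fintype V] [DecidableEq V]
    (E : Finset (V × V)) (v : V) (ε : ℝ) (hε0 : 0 < ε) (hε1 : ε < 0.1)
    (hd : ∀ w ∈ (expandStep E)^[⌈4 * Real.log (Fintype.card V) / ε⌉₊] {v},
      (1 + ε / 2) * (ddensity E : ℝ) < (outdeg E w : ℝ)) :
    (∀ i < ⌈4 * Real.log (Fintype.card V) / ε⌉₊,
      (1 + ε / 2) * (((expandStep E)^[i] {v}).card : ℝ) ≤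
        (((expandStep E)^[i + 1] {v}).card : ℝ)) ∧ False := by
  set d := ⌈4 * Real.log (Fintype.card V) / ε⌉₊
  set S : ℕ → Finset V := fun i => (expandStep E)^[i] {v}
  have hS_mono : Monotone S := fun i j hij =>
    Function.monotone_iterate_of_id_le (subset_expandStep E) hij {v}
  have hstep : ∀ i ≤ d, (1 + ε / 2) * #(S i) < #(S (i + 1)) := fun i hi => by
    simp only [S, Function.iterate_succ_apply']
    exact mul_card_lt_card_expandStep E _ ⟨v, hS_mono i.zero_le (mem_singleton_self v)⟩
      fun w hw => hd w (hS_mono hi hw)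
  refine ⟨fun i hi => (hstep i hi.le).le, ?_⟩
  have hgrowth : (1 + ε / 2) ^ (d + 1) ≤ #(S (d + 1)) := by
    simpa [S] using pow_mul_le_of_forall_mul_le_succ (by positivity)
      fun i hi => (hstep i (Nat.lt_succ_iff.1 hi)).le
  have hn_le : (Fintype.card V : ℝ) ≤ (1 + ε / 2) ^ d :=
    le_one_add_half_pow_ceil_log_div (by exact_mod_cast Fintype.card_pos_iff.2 ⟨v⟩) hε0
      (by linarith)
  have hS_le : (#(S (d + 1)) : ℝ) ≤ Fintype.card V := by exact_mod_cast card_le_univ _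
  have hpow_lt : (1 + ε / 2) ^ d < (1 + ε / 2) ^ (d + 1) :=
    pow_lt_pow_right₀ (by linarith) d.lt_succ_self
  linarith
end
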